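/- Fix k ≥ 1. Every finite clique complex on at most 2k+1 vertices is k-collapsible. In particular: (i) if the 1-skeleton of such a clique complex L is a proper subgraph of the complete graph K_{2k+1}, then every strongly connected, pure k-dimensional subcomplex of L contains a vertex of degree at most 2k−1; and (ii) if the 1-skeleton of L is the complete graph K_{2k+1}, then L is the 2k-dimensional simplex and collapses, via collapses of intervals [σ, σ ∪ {x}] over a fixed cone vertex x, to a complex of dimension at most k−1. -/

import Mathlib

open Finset

/-! Basic definitions for finite abstract simplicial complexes, viewed as
downward-closed families of nonempty finite sets of vertices. -/

variable {V : Type*} [DecidableEq V]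

/-- `K` is an abstract simplicial complex: every face is nonempty, and `K` is
closed under taking nonempty subsets. -/
def IsComplex (K : Set (Finset V)) : Prop :=
  (∀ σ ∈ K, σ.Nonempty) ∧ ∀ σ ∈ K, ∀ τ : Finset V, τ ⊆ σ → τ.Nonempty → τ ∈ K

/-- `τ` is a maximal face (facet) of `K`. -/
def IsMaximalFace (K : Set (Finset V)) (τ : Finset V) : Prop :=
  τ ∈ K ∧ ∀ η ∈ K, τ ⊆ η → η = τ

/-- `σ` is a free face of the maximal face `τ` in `K`: `σ ⊊ τ`, `τ` is maximal,
and `τ` is the only maximal face of `K` containing `σ`. -/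
def IsFreeFace (K : Set (Finset V)) (σ τ : Finset V) : Prop :=
  σ ∈ K ∧ IsMaximalFace K τ ∧ σ ⊂ τ ∧
    ∀ η : Finset V, IsMaximalFace K η → σ ⊆ η → η = τ

/-- One simplicial collapse: remove all faces `η` with `σ ⊆ η ⊆ τ`, where `σ` is a
free face of `τ`. -/
def CollapseStep (K K' : Set (Finset V)) : Prop :=
  ∃ σ τ : Finset V, IsFreeFace K σ τ ∧ K' = K \ {η | σ ⊆ η ∧ η ⊆ τ}

/-- `K` collapses to `K'` by a finite sequence of simplicial collapses. -/
def CollapsesTo (K K' : Set (Finset V)) : Prop :=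
  Relation.ReflTransGen CollapseStep K K'

/-- `K` is `k`-collapsible: it collapses to a complex of dimension at most `k - 1`,
i.e. in which every face has at most `k` vertices. -/
def Collapsible (k : ℕ) (K : Set (Finset V)) : Prop :=
  ∃ K' : Set (Finset V), CollapsesTo K K' ∧ ∀ σ ∈ K', σ.card ≤ k

/-- `K` is a clique (flag) complex: it is a simplicial complex, and any nonempty
finite vertex set whose 1-skeleton (vertices and edges) lies in `K` is a face of `K`. -/
def IsCliqueComplex (K : Set (Finset V)) : Prop :=
  IsComplex K ∧ ∀ σ : Finset V, σ.Nonempty →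
    (∀ τ : Finset V, τ ⊆ σ → τ.Nonempty → τ.card ≤ 2 → τ ∈ K) → σ ∈ K

/-- The flag closure of `S`: add every simplex whose 1-skeleton lies in `S`;
equivalently, the clique complex of the 1-skeleton of `S`. -/
def flagClosure (S : Set (Finset V)) : Set (Finset V) :=
  S ∪ {σ : Finset V | σ.Nonempty ∧
    ∀ τ : Finset V, τ ⊆ σ → τ.Nonempty → τ.card ≤ 2 → τ ∈ S}

/-- `S` is pure `d`-dimensional: it is nonempty and all its maximal faces have
dimension `d` (i.e. `d + 1` vertices). -/
def IsPure (S : Set (Finset V)) (d : ℕ) : Prop :=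
  S.Nonempty ∧ ∀ τ : Finset V, IsMaximalFace S τ → τ.card = d + 1

/-- Two `d`-dimensional faces of `S` are adjacent if they share a `(d-1)`-dimensional face. -/
def FacetAdj (S : Set (Finset V)) (d : ℕ) (σ τ : Finset V) : Prop :=
  σ ∈ S ∧ τ ∈ S ∧ σ.card = d + 1 ∧ τ.card = d + 1 ∧ (σ ∩ τ).card = d

/-- A pure `d`-dimensional complex is strongly connected if any two `d`-faces are
joined by a chain of `d`-faces in which consecutive faces share a `(d-1)`-face. -/
def StronglyConnected (S : Set (Finset V)) (d : ℕ) : Prop :=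
  ∀ σ ∈ S, ∀ τ ∈ S, σ.card = d + 1 → τ.card = d + 1 →
    Relation.ReflTransGen (FacetAdj S d) σ τ

/-- A relevant `d`-subcomplex of `X`: a subcomplex that is pure `d`-dimensional
and strongly connected. -/
def IsRelevant (X S : Set (Finset V)) (d : ℕ) : Prop :=
  S ⊆ X ∧ IsComplex S ∧ IsPure S d ∧ StronglyConnected S d

/-- A maximal relevant `d`-subcomplex of `X`: a relevant `d`-subcomplex not properly
contained in any other relevant `d`-subcomplex of `X`. -/
def IsMaxRelevant (X S : Set (Finset V)) (d : ℕ) : Prop :=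
  IsRelevant X S d ∧ ∀ T : Set (Finset V), IsRelevant X T d → S ⊆ T → T = S

/-- The degree of a vertex `v` in `S`: the number of vertices adjacent to `v`
in the 1-skeleton of `S`. -/
noncomputable def degreeIn (S : Set (Finset V)) (v : V) : ℕ :=
  {w : V | w ≠ v ∧ ({v, w} : Finset V) ∈ S}.ncard

/-- The link of a vertex `v` in `K`. -/
def link (K : Set (Finset V)) (v : V) : Set (Finset V) :=
  {σ : Finset V | σ ∈ K ∧ v ∉ σ ∧ insert v σ ∈ K}

/-- The star of a face `σ` in `K`. -/
def star (K : Set (Finset V)) (σ : Finset V) : Set (Finset V) :=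
  {τ ∈ K | σ ⊆ τ}

/-- The vertex support of `S`. -/
def vsupp (S : Set (Finset V)) : Set V := {v : V | ∃ σ ∈ S, v ∈ σ}

/-!
Families of faces may contain `∅` until the very end, and every collapse removes a pair
`(ρ, insert w ρ)` with `m ≤ #ρ`. The cliques of a graph inside a vertex set `W` with
`#W ≤ 2m + 1` collapse in this way to faces with at most `m` vertices, by induction on `W`.
For `v ∈ W` they split as `del v ∪ v * lk v`, where `lk v` consists of the cliques in the
neighbourhood `N` of `v`. If `N = W \ {v}` this is a cone with apex `v`, and collapsing the
pairs `(σ, insert v σ)` from the largest `σ` down leaves faces with at most `m` vertices.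
Otherwise `#N ≤ #W - 2 ≤ 2(m - 1) + 1`, so `lk v` collapses to faces with at most `m - 1`
vertices, and coning these collapses with `v` collapses the star of `v`. What remains of the
star has faces with at most `m` vertices, which cannot block a collapse of a pair with
`m ≤ #ρ`; so the collapse of `del v`, on `#W - 1 ≤ 2m` vertices, goes through unchanged.

For the degree bound: if `uv` is a non-edge and `u` is a vertex of `S`, then `u` has degree at
most `|V| - 2`; otherwise no vertex of `S` is adjacent to `u` in `S`.
-/

section Collapses

variable {m : ℕ} {K K' : Set (Finset V)} {ρ : Finset V} {w : V}

/-- Freeness of `ρ` is phrased by `subset_insert_of_subset` rather than through maximal faces,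
which would need `K` to be finite. -/
structure PairCollapse (m : ℕ) (K : Set (Finset V)) (ρ : Finset V) (w : V)
    (K' : Set (Finset V)) : Prop where
  le_card : m ≤ ρ.card
  notMem : w ∉ ρ
  mem : ρ ∈ K
  insert_mem : insert w ρ ∈ K
  subset_insert_of_subset : ∀ η ∈ K, ρ ⊆ η → η ⊆ insert w ρ
  eq_diff : K' = K \ {ρ, insert w ρ}

def CollapseAbove (m : ℕ) (K K' : Set (Finset V)) : Prop :=
  ∃ ρ w, PairCollapse m K ρ w K'

def ConeCollapseAbove (m : ℕ) (x : V) (K K' : Set (Finset V)) : Prop :=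
  ∃ ρ, PairCollapse m K ρ x K'

lemma setOf_subset_and_subset_insert (hw : w ∉ ρ) :
    {η | ρ ⊆ η ∧ η ⊆ insert w ρ} = {ρ, insert w ρ} := by
  ext η
  constructor
  · rintro ⟨hρη, hηw⟩
    by_cases hwη : w ∈ η
    · exact Or.inr (subset_antisymm hηw (insert_subset hwη hρη))
    · exact Or.inl (subset_antisymm ((subset_insert_iff_of_notMem hwη).1 hηw) hρη)
  · rintro (rfl | rfl)
    · exact ⟨subset_rfl, subset_insert w η⟩
    · exact ⟨subset_insert w ρ, subset_rfl⟩

lemma injOn_insert (v : V) : Set.InjOn (insert v) {ζ : Finset V | v ∉ ζ} :=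
  fun a ha b hb hab => by rw [← erase_insert ha, hab, erase_insert hb]

lemma forall_mem_image_insert_card_le {F : Set (Finset V)} {v : V}
    (hF : ∀ σ ∈ F, σ.card ≤ m) : ∀ σ ∈ insert v '' F, σ.card ≤ m + 1 := by
  rintro _ ⟨τ, hτ, rfl⟩
  exact (card_insert_le v τ).trans (Nat.succ_le_succ (hF τ hτ))

namespace PairCollapse

lemma subset (h : PairCollapse m K ρ w K') : K' ⊆ K :=
  h.eq_diff ▸ Set.sdiff_subset

lemma isFreeFace (h : PairCollapse m K ρ w K') (hm : 1 ≤ m) :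
    IsFreeFace (K \ {∅}) ρ (insert w ρ) := by
  have hρ : ρ ≠ ∅ := card_pos.1 (hm.trans h.le_card) |>.ne_empty
  have htop : insert w ρ ∈ K \ {∅} := ⟨h.insert_mem, insert_ne_empty w ρ⟩
  have hle : ∀ η ∈ K \ {∅}, ρ ⊆ η → η ⊆ insert w ρ := fun η hη => h.subset_insert_of_subset η hη.1
  refine ⟨⟨h.mem, hρ⟩, ⟨htop, fun η hη hwη => ?_⟩, ssubset_insert h.notMem, fun η hη hρη => ?_⟩
  · exact subset_antisymm (hle η hη ((subset_insert w ρ).trans hwη)) hwη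
  · exact (hη.2 _ htop (hle η hη.1 hρη)).symm

lemma diff_empty_eq (h : PairCollapse m K ρ w K') :
    K' \ {∅} = (K \ {∅}) \ {η | ρ ⊆ η ∧ η ⊆ insert w ρ} := by
  rw [setOf_subset_and_subset_insert h.notMem, h.eq_diff, Set.sdiff_sdiff_comm]

lemma pair_subset (h : PairCollapse m K ρ w K') : ({ρ, insert w ρ} : Set (Finset V)) ⊆ K :=
  Set.insert_subset h.mem (Set.singleton_subset_iff.2 h.insert_mem)

lemma union_image_insert {A : Set (Finset V)} {v : V} (h : PairCollapse m K ρ w K')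
    (hA : ∀ a ∈ A, v ∉ a) (hK : ∀ ζ ∈ K, v ∉ ζ) :
    PairCollapse (m + 1) (A ∪ insert v '' K) (insert v ρ) w (A ∪ insert v '' K') := by
  have hvρ : v ∉ ρ := hK ρ h.mem
  have hwv : w ≠ v := fun hwv => hK _ h.insert_mem (hwv ▸ mem_insert_self w ρ)
  have hcomm : insert w (insert v ρ) = insert v (insert w ρ) := insert_comm w v ρ
  refine ⟨?_, ?_, Or.inr ⟨ρ, h.mem, rfl⟩, hcomm ▸ Or.inr ⟨_, h.insert_mem, rfl⟩, ?_, ?_⟩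
  · rw [card_insert_of_notMem hvρ]; exact Nat.add_le_add_right h.le_card 1
  · simpa [hwv] using h.notMem
  · rintro η (hη | ⟨ζ, hζ, rfl⟩) hρη
    · exact absurd (hρη (mem_insert_self v ρ)) (hA η hη)
    · have hρζ : ρ ⊆ ζ := (subset_insert_iff_of_notMem hvρ).1 ((subset_insert v ρ).trans hρη)
      exact hcomm ▸ insert_subset_insert v (h.subset_insert_of_subset ζ hζ hρζ)
  · have hpair : ({insert v ρ, insert w (insert v ρ)} : Set (Finset V)) =
        insert v '' {ρ, insert w ρ} := by
      rw [Set.image_pair, hcomm]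
    have hdisj : Disjoint A (insert v '' {ρ, insert w ρ}) := by
      rw [Set.disjoint_right]
      rintro _ ⟨ζ, -, rfl⟩ hζ
      exact hA _ hζ (mem_insert_self v ζ)
    rw [h.eq_diff, hpair, Set.union_sdiff_distrib, hdisj.sdiff_eq_left,
      ((injOn_insert v).mono hK).image_sdiff_subset h.pair_subset]

lemma union_of_card_le {J : Set (Finset V)} (h : PairCollapse m K ρ w K')
    (hJ : ∀ j ∈ J, j.card ≤ m) (hKJ : Disjoint K J) : PairCollapse m (K ∪ J) ρ w (K' ∪ J) := by
  have hρJ : ∀ j ∈ J, ¬ ρ ⊆ j := fun j hj hρj =>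
    Set.disjoint_left.1 hKJ (eq_of_subset_of_card_le hρj ((hJ j hj).trans h.le_card) ▸ h.mem) hj
  refine ⟨h.le_card, h.notMem, Or.inl h.mem, Or.inl h.insert_mem, ?_, ?_⟩
  · rintro η (hη | hη) hρη
    exacts [h.subset_insert_of_subset η hη hρη, absurd hρη (hρJ η hη)]
  · rw [h.eq_diff, Set.union_sdiff_distrib, (hKJ.symm.mono_right h.pair_subset).sdiff_eq_left]

end PairCollapse

namespace CollapseAbove

lemma reflTransGen_union_image_insert {A Y F : Set (Finset V)} {v : V}
    (h : Relation.ReflTransGen (CollapseAbove m) Y F) (hA : ∀ a ∈ A, v ∉ a)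
    (hY : ∀ ζ ∈ Y, v ∉ ζ) :
    Relation.ReflTransGen (CollapseAbove (m + 1)) (A ∪ insert v '' Y) (A ∪ insert v '' F) := by
  induction h using Relation.ReflTransGen.head_induction_on with
  | refl => exact .refl
  | head hstep _ ih =>
    obtain ⟨ρ, w, hc⟩ := hstep
    exact .head ⟨_, _, hc.union_image_insert hA hY⟩ (ih fun ζ hζ => hY ζ (hc.subset hζ))

lemma reflTransGen_union_of_card_le {J F : Set (Finset V)}
    (h : Relation.ReflTransGen (CollapseAbove m) K F) (hJ : ∀ j ∈ J, j.card ≤ m)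
    (hKJ : Disjoint K J) :
    Relation.ReflTransGen (CollapseAbove m) (K ∪ J) (F ∪ J) := by
  induction h using Relation.ReflTransGen.head_induction_on with
  | refl => exact .refl
  | head hstep _ ih =>
    obtain ⟨ρ, w, hc⟩ := hstep
    exact .head ⟨_, _, hc.union_of_card_le hJ hKJ⟩ (ih (hKJ.mono_left hc.subset))

lemma reflTransGen_union_image_insert_of_reflTransGen {A Y FA FY : Set (Finset V)} {v : V}
    (hA : Relation.ReflTransGen (CollapseAbove (m + 1)) A FA)
    (hY : Relation.ReflTransGen (CollapseAbove m) Y FY) (hvA : ∀ a ∈ A, v ∉ a)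
    (hvY : ∀ ζ ∈ Y, v ∉ ζ) (hFY : ∀ σ ∈ FY, σ.card ≤ m) :
    Relation.ReflTransGen (CollapseAbove (m + 1)) (A ∪ insert v '' Y) (FA ∪ insert v '' FY) := by
  have hAFY : Disjoint A (insert v '' FY) := by
    rw [Set.disjoint_right]
    rintro _ ⟨ζ, -, rfl⟩ hζ
    exact hvA _ hζ (mem_insert_self v ζ)
  exact (reflTransGen_union_image_insert hY hvA hvY).trans
    (reflTransGen_union_of_card_le hA (forall_mem_image_insert_card_le hFY) hAFY)

lemma collapsesTo_diff_empty {F : Set (Finset V)} (hm : 1 ≤ m)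
    (h : Relation.ReflTransGen (CollapseAbove m) K F) : CollapsesTo (K \ {∅}) (F \ {∅}) :=
  h.lift (· \ {∅}) fun _ _ ⟨ρ, w, hc⟩ => ⟨ρ, insert w ρ, hc.isFreeFace hm, hc.diff_empty_eq⟩

end CollapseAbove

lemma ConeCollapseAbove.reflTransGen_diff_empty {x : V} {F : Set (Finset V)} (hm : 1 ≤ m)
    (h : Relation.ReflTransGen (ConeCollapseAbove m x) K F) :
    Relation.ReflTransGen (fun K K'' : Set (Finset V) => ∃ σ : Finset V,
        IsFreeFace K σ (insert x σ) ∧ K'' = K \ {η | σ ⊆ η ∧ η ⊆ insert x σ})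
      (K \ {∅}) (F \ {∅}) :=
  h.lift (· \ {∅}) fun _ _ ⟨ρ, hc⟩ => ⟨ρ, hc.isFreeFace hm, hc.diff_empty_eq⟩

end Collapses

section Cone

variable {m : ℕ} {x : V} {σ : Finset V}

lemma pairCollapse_union_image_insert_of_maximal {B : Set (Finset V)} (hxB : ∀ τ ∈ B, x ∉ τ)
    (hσ : Maximal (· ∈ B) σ) (hm : m ≤ σ.card) :
    PairCollapse m (B ∪ insert x '' B) σ x ((B \ {σ}) ∪ insert x '' (B \ {σ})) := by
  have hxσ : x ∉ σ := hxB σ hσ.prop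
  refine ⟨hm, hxσ, Or.inl hσ.prop, Or.inr ⟨σ, hσ.prop, rfl⟩, ?_, ?_⟩
  · rintro η (hη | ⟨τ, hτ, rfl⟩) hση
    · exact hσ.eq_of_le hη hση ▸ subset_insert x σ
    · have hστ : σ ⊆ τ := (subset_insert_iff_of_notMem hxσ).1 hση
      exact hσ.eq_of_le hτ hστ ▸ subset_rfl
  · have hσx : σ ∉ insert x '' B := by
      rintro ⟨τ, -, hτσ⟩
      exact hxσ (hτσ ▸ mem_insert_self x τ)
    have hxσB : insert x σ ∉ B := fun h => hxB _ h (mem_insert_self x σ)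
    rw [Set.union_sdiff_distrib, Set.pair_comm, Set.sdiff_insert_of_notMem hxσB, Set.pair_comm,
      Set.sdiff_insert_of_notMem hσx, ← Set.image_singleton,
      ((injOn_insert x).mono hxB).image_sdiff_subset (Set.singleton_subset_iff.2 hσ.prop)]

lemma coneCollapseAbove_union_image_insert (m : ℕ) {B : Set (Finset V)} (hB : B.Finite)
    (hxB : ∀ σ ∈ B, x ∉ σ) :
    Relation.ReflTransGen (ConeCollapseAbove m x) (B ∪ insert x '' B)
      ({σ ∈ B | σ.card < m} ∪ insert x '' {σ ∈ B | σ.card < m}) := by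
  by_cases hsmall : ∀ σ ∈ B, σ.card < m
  · rw [Set.sep_eq_self_iff_mem_true.2 hsmall]
  push Not at hsmall
  obtain ⟨σ₀, hσ₀B, hσ₀⟩ := hsmall
  obtain ⟨σ, hσB, hσmax⟩ := B.exists_max_image card hB ⟨σ₀, hσ₀B⟩
  have hσ : Maximal (· ∈ B) σ :=
    ⟨hσB, fun τ hτ hστ => (eq_of_subset_of_card_le hστ (hσmax τ hτ)).ge⟩
  have hmσ : m ≤ σ.card := hσ₀.trans (hσmax σ₀ hσ₀B)
  have hsep : {τ ∈ B \ {σ} | τ.card < m} = {τ ∈ B | τ.card < m} := by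
    ext τ
    refine ⟨fun h => ⟨h.1.1, h.2⟩, fun h => ⟨⟨h.1, ?_⟩, h.2⟩⟩
    rintro rfl
    exact h.2.not_ge hmσ
  exact .head ⟨σ, pairCollapse_union_image_insert_of_maximal hxB hσ hmσ⟩
    (hsep ▸ coneCollapseAbove_union_image_insert (B := B \ {σ}) m hB.sdiff fun τ hτ => hxB τ hτ.1)
termination_by B.ncard
decreasing_by exact Set.ncard_sdiff_singleton_lt_of_mem hσB hB

end Cone

section Cliques

variable {G : SimpleGraph V} {W : Finset V} {v : V}

def cliquesIn (G : SimpleGraph V) (W : Finset V) : Set (Finset V) :=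
  {σ | σ ⊆ W ∧ G.IsClique (σ : Set V)}

omit [DecidableEq V] in
lemma cliquesIn_finite (G : SimpleGraph V) (W : Finset V) : (cliquesIn G W).Finite :=
  W.powerset.finite_toSet.subset fun _ hσ => mem_coe.2 (mem_powerset.2 hσ.1)

omit [DecidableEq V] in
lemma notMem_of_mem_cliquesIn {σ : Finset V} (hσ : σ ∈ cliquesIn G W) (hv : v ∉ W) : v ∉ σ :=
  fun h => hv (hσ.1 h)

omit [DecidableEq V] in
lemma cliquesIn_top_univ [Fintype V] : cliquesIn (⊤ : SimpleGraph V) univ = Set.univ := by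
  ext σ
  simp [cliquesIn]

lemma cliquesIn_eq_union_image_insert [DecidableRel G.Adj] (hv : v ∈ W) :
    cliquesIn G W = cliquesIn G (W.erase v) ∪ insert v '' cliquesIn G (W.filter (G.Adj v)) := by
  ext σ
  constructor
  · rintro ⟨hσW, hσ⟩
    by_cases hvσ : v ∈ σ
    · refine Or.inr ⟨σ.erase v, ⟨fun u hu => ?_, hσ.subset (coe_subset.2 (erase_subset v σ))⟩,
        insert_erase hvσ⟩
      obtain ⟨huv, huσ⟩ := mem_erase.1 hu
      exact mem_filter.2 ⟨hσW huσ, hσ hvσ huσ huv.symm⟩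
    · exact Or.inl ⟨fun u hu => mem_erase.2 ⟨fun h => hvσ (h ▸ hu), hσW hu⟩, hσ⟩
  · rintro (⟨hσW, hσ⟩ | ⟨ζ, ⟨hζW, hζ⟩, rfl⟩)
    · exact ⟨hσW.trans (erase_subset v W), hσ⟩
    · refine ⟨insert_subset hv (hζW.trans (filter_subset _ W)), ?_⟩
      rw [coe_insert, SimpleGraph.isClique_insert]
      exact ⟨hζ, fun u hu _ => (mem_filter.1 (hζW hu)).2⟩

lemma exists_coneCollapseAbove_cliquesIn (hv : v ∈ W) (hvW : ∀ y ∈ W, y ≠ v → G.Adj v y)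
    (m : ℕ) : ∃ F, Relation.ReflTransGen (ConeCollapseAbove m v) (cliquesIn G W) F ∧
      ∀ σ ∈ F, σ.card ≤ m := by
  classical
  have hN : W.filter (G.Adj v) = W.erase v := by
    ext y
    simp only [mem_filter, mem_erase]
    exact ⟨fun h => ⟨(G.ne_of_adj h.2).symm, h.1⟩, fun h => ⟨h.2, hvW y h.2 h.1⟩⟩
  rw [cliquesIn_eq_union_image_insert hv, hN]
  refine ⟨_, coneCollapseAbove_union_image_insert m (cliquesIn_finite G _)
    fun σ hσ => notMem_of_mem_cliquesIn hσ (notMem_erase v W), ?_⟩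
  rintro σ (hσ | ⟨τ, hτ, rfl⟩)
  exacts [hσ.2.le, (card_insert_le v τ).trans hτ.2]

lemma card_filter_adj_add_two_le [DecidableRel G.Adj] {y : V} (hv : v ∈ W) (hy : y ∈ W)
    (hvy : ¬ G.Adj v y) (hyv : y ≠ v) : (W.filter (G.Adj v)).card + 2 ≤ W.card := by
  have hsub : W.filter (G.Adj v) ⊆ (W.erase v).erase y := fun u hu => by
    obtain ⟨huW, hvu⟩ := mem_filter.1 hu
    exact mem_erase.2 ⟨fun h => hvy (h ▸ hvu), mem_erase.2 ⟨(G.ne_of_adj hvu).symm, huW⟩⟩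
  have := card_le_card hsub
  rw [card_erase_of_mem (mem_erase.2 ⟨hyv, hy⟩), card_erase_of_mem hv] at this
  have : 2 ≤ W.card := one_lt_card.2 ⟨v, hv, y, hy, hyv.symm⟩
  omega

theorem exists_collapseAbove_cliquesIn (G : SimpleGraph V) (m : ℕ) (W : Finset V)
    (hW : W.card ≤ 2 * m + 1) :
    ∃ F, Relation.ReflTransGen (CollapseAbove m) (cliquesIn G W) F ∧ ∀ σ ∈ F, σ.card ≤ m := by
  classical
  induction W using Finset.strongInduction generalizing m with
  | H W ih =>
  obtain rfl | ⟨v, hv⟩ := W.eq_empty_or_nonempty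
  · exact ⟨_, .refl, fun σ hσ => by simp [subset_empty.1 hσ.1]⟩
  by_cases hcone : ∀ y ∈ W, y ≠ v → G.Adj v y
  · obtain ⟨F, hF, hFm⟩ := exists_coneCollapseAbove_cliquesIn hv hcone m
    exact ⟨F, Relation.ReflTransGen.mono (fun _ _ ⟨ρ, hc⟩ => ⟨ρ, v, hc⟩) _ _ hF, hFm⟩
  push Not at hcone
  obtain ⟨y, hy, hyv, hvy⟩ := hcone
  have hN := card_filter_adj_add_two_le hv hy hvy hyv
  obtain ⟨m, rfl⟩ : ∃ m', m = m' + 1 := Nat.exists_eq_add_of_le' (by omega)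
  obtain ⟨Fl, hFl, hFlm⟩ := ih _ (filter_ssubset.2 ⟨v, hv, G.irrefl⟩) m (by omega)
  obtain ⟨F, hF, hFm⟩ := ih (W.erase v) (erase_ssubset hv) (m + 1)
    (by rw [card_erase_of_mem hv]; omega)
  have hvA : ∀ σ ∈ cliquesIn G (W.erase v), v ∉ σ :=
    fun σ hσ => notMem_of_mem_cliquesIn hσ (notMem_erase v W)
  have hvN : ∀ σ ∈ cliquesIn G (W.filter (G.Adj v)), v ∉ σ :=
    fun σ hσ => notMem_of_mem_cliquesIn hσ fun h => G.irrefl (mem_filter.1 h).2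
  refine ⟨F ∪ insert v '' Fl, ?_, fun σ hσ =>
    hσ.elim (hFm σ) (forall_mem_image_insert_card_le hFlm σ)⟩
  rw [cliquesIn_eq_union_image_insert hv]
  exact CollapseAbove.reflTransGen_union_image_insert_of_reflTransGen hF hFl hvA hvN hFlm

end Cliques

section CliqueComplex

variable {L S : Set (Finset V)}

lemma Finset.eq_singleton_or_eq_pair_of_card_le_two {s : Finset V} (hs : s.Nonempty)
    (h2 : s.card ≤ 2) : (∃ u, s = {u}) ∨ ∃ u w, u ≠ w ∧ s = {u, w} := by
  have := hs.card_pos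
  rcases (by omega : s.card = 1 ∨ s.card = 2) with h | h
  exacts [Or.inl (card_eq_one.1 h), Or.inr (card_eq_two.1 h)]

def oneSkeleton (L : Set (Finset V)) : SimpleGraph V where
  Adj u v := u ≠ v ∧ ({u, v} : Finset V) ∈ L
  symm := ⟨fun u v h => ⟨h.1.symm, pair_comm u v ▸ h.2⟩⟩
  loopless := ⟨fun _ h => h.1 rfl⟩

lemma oneSkeleton_adj {u v : V} : (oneSkeleton L).Adj u v ↔ u ≠ v ∧ ({u, v} : Finset V) ∈ L :=
  Iff.rfl

omit [DecidableEq V] in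
lemma IsComplex.singleton_mem (hS : IsComplex S) {σ : Finset V} (hσ : σ ∈ S) {u : V}
    (hu : u ∈ σ) : ({u} : Finset V) ∈ S :=
  hS.2 σ hσ {u} (singleton_subset_iff.2 hu) (singleton_nonempty u)

lemma IsCliqueComplex.exists_eq_cliquesIn_diff_empty [Fintype V] (hL : IsCliqueComplex L) :
    ∃ W : Finset V, L = cliquesIn (oneSkeleton L) W \ {∅} := by
  classical
  refine ⟨univ.filter fun u => {u} ∈ L, Set.ext fun σ => ⟨fun hσ => ?_, ?_⟩⟩
  · refine ⟨⟨fun u hu => mem_filter.2 ⟨mem_univ u, hL.1.singleton_mem hσ hu⟩,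
      fun u hu w hw huw => oneSkeleton_adj.2 ⟨huw, hL.1.2 σ hσ {u, w} ?_ (insert_nonempty u _)⟩⟩,
      (hL.1.1 σ hσ).ne_empty⟩
    exact insert_subset hu (singleton_subset_iff.2 hw)
  · rintro ⟨⟨hσW, hσ⟩, hσne⟩
    refine hL.2 σ (nonempty_iff_ne_empty.2 hσne) fun τ hτσ hτ hτ2 => ?_
    obtain ⟨u, rfl⟩ | ⟨u, w, huw, rfl⟩ := eq_singleton_or_eq_pair_of_card_le_two hτ hτ2
    · exact (mem_filter.1 (hσW (hτσ (mem_singleton_self u)))).2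
    · exact (oneSkeleton_adj.1 (hσ (hτσ (mem_insert_self u {w}))
        (hτσ (mem_insert_of_mem (mem_singleton_self w))) huw)).2

lemma IsCliqueComplex.eq_setOf_nonempty_of_forall_pair_mem [Fintype V] (hL : IsCliqueComplex L)
    (hV : 1 < Fintype.card V) (hall : ∀ u v : V, u ≠ v → ({u, v} : Finset V) ∈ L) :
    L = {τ | τ.Nonempty} := by
  refine Set.ext fun τ => ⟨hL.1.1 τ, fun hτ => hL.2 τ hτ fun ρ _ hρ hρ2 => ?_⟩
  obtain ⟨u, rfl⟩ | ⟨u, w, huw, rfl⟩ := eq_singleton_or_eq_pair_of_card_le_two hρ hρ2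
  · obtain ⟨w, hwu⟩ := Fintype.exists_ne_of_one_lt_card hV u
    exact hL.1.singleton_mem (hall u w hwu.symm) (mem_insert_self u {w})
  · exact hall u w huw

lemma degreeIn_le_card_sub_two [Fintype V] {a b : V} (hab : a ≠ b)
    (hS : ({a, b} : Finset V) ∉ S) : degreeIn S a ≤ Fintype.card V - 2 := by
  have hsub : {w | w ≠ a ∧ ({a, w} : Finset V) ∈ S} ⊆ ({a, b} : Set V)ᶜ := by
    rintro w ⟨hwa, hw⟩ (rfl | rfl)
    exacts [hwa rfl, hS hw]
  calc degreeIn S a ≤ ({a, b}ᶜ : Set V).ncard := Set.ncard_le_ncard hsub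
    _ = Fintype.card V - 2 := by
      rw [Set.ncard_compl, Set.ncard_pair hab, Nat.card_eq_fintype_card]

lemma IsComplex.exists_singleton_mem_degreeIn_le [Fintype V] (hS : IsComplex S) (hne : S.Nonempty)
    {u v : V} (huv : u ≠ v) (huvS : ({u, v} : Finset V) ∉ S) :
    ∃ w, ({w} : Finset V) ∈ S ∧ degreeIn S w ≤ Fintype.card V - 2 := by
  by_cases hu : ({u} : Finset V) ∈ S
  · exact ⟨u, hu, degreeIn_le_card_sub_two huv huvS⟩
  obtain ⟨σ, hσ⟩ := hne
  obtain ⟨w, hw⟩ := hS.1 σ hσ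
  have hwS := hS.singleton_mem hσ hw
  refine ⟨w, hwS, degreeIn_le_card_sub_two (b := u) (fun h => hu (h ▸ hwS)) fun h => hu ?_⟩
  exact hS.singleton_mem h (mem_insert_of_mem (mem_singleton_self u))

end CliqueComplex

theorem cliqueComplex_on_few_vertices_collapsible_general {V : Type*} [DecidableEq V] [Fintype V]
    (k : ℕ) (hk : 1 ≤ k) (L : Set (Finset V)) (hL : IsCliqueComplex L)
    (hcard : Fintype.card V ≤ 2 * k + 1) :
    Collapsible k L ∧
    ((∃ u v : V, u ≠ v ∧ ({u, v} : Finset V) ∉ L) →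
      ∀ S : Set (Finset V), S ⊆ L → IsComplex S → IsPure S k → StronglyConnected S k →
        ∃ w : V, ({w} : Finset V) ∈ S ∧ degreeIn S w ≤ 2 * k - 1) ∧
    ((Fintype.card V = 2 * k + 1 ∧ ∀ u v : V, u ≠ v → ({u, v} : Finset V) ∈ L) →
      L = {τ : Finset V | τ.Nonempty} ∧
      ∃ x : V, ∃ K' : Set (Finset V),
        Relation.ReflTransGen
          (fun K K'' : Set (Finset V) => ∃ σ : Finset V,
            IsFreeFace K σ (insert x σ) ∧ K'' = K \ {η | σ ⊆ η ∧ η ⊆ insert x σ})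
          L K' ∧
        ∀ σ ∈ K', σ.card ≤ k) := by
  refine ⟨?_, fun ⟨u, v, huv, huvL⟩ S hSL hS hpure _ => ?_, fun ⟨hcardV, hall⟩ => ?_⟩
  · obtain ⟨W, hLW⟩ := hL.exists_eq_cliquesIn_diff_empty
    obtain ⟨F, hF, hFk⟩ :=
      exists_collapseAbove_cliquesIn (oneSkeleton L) k W ((card_le_univ W).trans hcard)
    exact ⟨F \ {∅}, hLW ▸ CollapseAbove.collapsesTo_diff_empty hk hF, fun σ hσ => hFk σ hσ.1⟩
  · obtain ⟨w, hw, hdeg⟩ :=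
      hS.exists_singleton_mem_degreeIn_le hpure.1 huv fun h => huvL (hSL h)
    exact ⟨w, hw, hdeg.trans (by omega)⟩
  · have hL' := hL.eq_setOf_nonempty_of_forall_pair_mem (by omega) hall
    obtain ⟨x⟩ : Nonempty V := Fintype.card_pos_iff.1 (by omega)
    obtain ⟨F, hF, hFk⟩ := exists_coneCollapseAbove_cliquesIn (G := ⊤) (mem_univ x)
      (fun _ _ hyx => hyx.symm) k
    have hLtop : L = cliquesIn ⊤ univ \ {∅} := by
      rw [hL', cliquesIn_top_univ]
      ext τ
      simp [nonempty_iff_ne_empty]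
    exact ⟨hL', x, F \ {∅}, hLtop ▸ ConeCollapseAbove.reflTransGen_diff_empty hk hF,
      fun σ hσ => hFk σ hσ.1⟩

/-- Fix `k ≥ 1`. Every finite clique complex `L` on at most `2k + 1`
vertices is `k`-collapsible. In particular: (i) if the 1-skeleton of `L` is a proper
subgraph of the complete graph on the `2k + 1` vertices (some pair of distinct vertices
is not an edge of `L`), then every strongly connected, pure `k`-dimensional subcomplex of
`L` contains a vertex of degree at most `2k - 1`; and (ii) if the 1-skeleton of `L` is the
complete graph `K_{2k+1}`, then `L` is the `2k`-dimensional simplex on its vertex set and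
collapses, via collapses of intervals `[σ, σ ∪ {x}]` over a fixed cone vertex `x`, to a
complex of dimension at most `k - 1`. -/
theorem cliqueComplex_on_few_vertices_collapsible {V : Type*} [DecidableEq V] [Fintype V]
    (k : ℕ) (hk : 1 ≤ k) (L : Set (Finset V)) (hL : IsCliqueComplex L) (hfin : L.Finite)
    (hcard : Fintype.card V ≤ 2 * k + 1) :
    Collapsible k L ∧
    ((∃ u v : V, u ≠ v ∧ ({u, v} : Finset V) ∉ L) →
      ∀ S : Set (Finset V), S ⊆ L → IsComplex S → IsPure S k → StronglyConnected S k →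
        ∃ w : V, ({w} : Finset V) ∈ S ∧ degreeIn S w ≤ 2 * k - 1) ∧
    ((Fintype.card V = 2 * k + 1 ∧ ∀ u v : V, u ≠ v → ({u, v} : Finset V) ∈ L) →
      L = {τ : Finset V | τ.Nonempty} ∧
      ∃ x : V, ∃ K' : Set (Finset V),
        Relation.ReflTransGen
          (fun K K'' : Set (Finset V) => ∃ σ : Finset V,
            IsFreeFace K σ (insert x σ) ∧ K'' = K \ {η | σ ⊆ η ∧ η ⊆ insert x σ})
          L K' ∧
        ∀ σ ∈ K', σ.card ≤ k) :=
  cliqueComplex_on_few_vertices_collapsible_general k hk L hL hcard
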